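/- arXiv:math/9501201 — 6 statements merged into one kernel-verified Lean document; each statement's English description precedes it below -/
import Mathlib

section
/- For all W, Y ∈ 𝒟, the composition U_W ∘ U_Y is an affine map on 𝒟: setting X = (CY+D)⁻¹C, one has U_W(U_Y(Z)) = U_W(Y) + (I+(W−Y)X)(Z−Y)(I+X(W−Y)) for every Z ∈ 𝒟, where U_Y(Z) = Y − (Z−Y)(CZ+D)⁻¹(CY+D). -/
open ContinuousLinearMap Set

set_option synthInstance.maxHeartbeats 1000000
set_option maxHeartbeats 1000000

/-- The linear fractional transformation `U_W(A) = W − (A−W)(CA+D)⁻¹(CW+D)`, defined on the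
ambient space `ℒ(H,K)`. -/
noncomputable def lftSymm {H K : Type*}
    [NormedAddCommGroup H] [InnerProductSpace ℂ H] [CompleteSpace H]
    [NormedAddCommGroup K] [InnerProductSpace ℂ K] [CompleteSpace K]
    (C : K →L[ℂ] H) (D : H →L[ℂ] H) (W A : H →L[ℂ] K) : H →L[ℂ] K :=
  W - (A - W).comp ((Ring.inverse (C.comp A + D)).comp (C.comp W + D))

/-!
Write `T_A = CA + D` and `X = T_Y⁻¹C`. Since `C(Z − Y) = T_Z − T_Y`, one finds
`C U_Y(Z) + D = T_Y T_Z⁻¹ T_Y`, so `U_W(U_Y(Z))` only involves `T_Y⁻¹ T_Z T_Y⁻¹ T_W`. Expanding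
`T_Y⁻¹ T_Z = I + X(Z − Y)` and `T_Y⁻¹ T_W = I + X(W − Y)` makes the expression affine in `Z`.
-/

theorem inverse_comp_add_comp_add {𝕜 E F : Type*} [NormedField 𝕜]
    [NormedAddCommGroup E] [NormedSpace 𝕜 E] [NormedAddCommGroup F] [NormedSpace 𝕜 F]
    (C : F →L[𝕜] E) (D : E →L[𝕜] E) {Y : E →L[𝕜] F} (hY : IsUnit (C.comp Y + D))
    (A : E →L[𝕜] F) :
    (Ring.inverse (C.comp Y + D)).comp (C.comp A + D) =
      ContinuousLinearMap.id 𝕜 E + ((Ring.inverse (C.comp Y + D)).comp C).comp (A - Y) := by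
  have hA : C.comp A + D = (C.comp Y + D) + C.comp (A - Y) := by
    rw [ContinuousLinearMap.comp_sub]; abel
  rw [hA, ContinuousLinearMap.comp_add, ← mul_def, Ring.inverse_mul_cancel _ hY, one_def,
    comp_assoc]

section lftSymm

variable {H K : Type*} [NormedAddCommGroup H] [InnerProductSpace ℂ H] [CompleteSpace H]
  [NormedAddCommGroup K] [InnerProductSpace ℂ K] [CompleteSpace K]
  (C : K →L[ℂ] H) (D : H →L[ℂ] H) {Y Z : H →L[ℂ] K}

theorem comp_lftSymm_add (hZ : IsUnit (C.comp Z + D)) :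
    C.comp (lftSymm C D Y Z) + D =
      (C.comp Y + D).comp ((Ring.inverse (C.comp Z + D)).comp (C.comp Y + D)) := by
  have hZY : C.comp (Z - Y) = (C.comp Z + D) - (C.comp Y + D) := by
    rw [ContinuousLinearMap.comp_sub]; abel
  rw [lftSymm, ContinuousLinearMap.comp_sub, ← comp_assoc, hZY, ← mul_def, ← mul_def, ← mul_def,
    sub_mul, Ring.mul_inverse_cancel_left _ _ hZ]
  abel

theorem inverse_comp_lftSymm_add (hY : IsUnit (C.comp Y + D)) (hZ : IsUnit (C.comp Z + D)) :
    Ring.inverse (C.comp (lftSymm C D Y Z) + D) =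
      (Ring.inverse (C.comp Y + D)).comp ((C.comp Z + D).comp (Ring.inverse (C.comp Y + D))) := by
  rw [comp_lftSymm_add C D hZ, ← mul_def, ← mul_def, ← mul_def, ← mul_def,
    Ring.inverse_mul (Or.inl hY), Ring.inverse_mul (Or.inr hY), Ring.inverse_inverse hZ, mul_assoc]

theorem lftSymm_lftSymm (W : H →L[ℂ] K) (hY : IsUnit (C.comp Y + D))
    (hZ : IsUnit (C.comp Z + D)) :
    lftSymm C D W (lftSymm C D Y Z) =
      lftSymm C D W Y +
        ((ContinuousLinearMap.id ℂ K + (W - Y).comp ((Ring.inverse (C.comp Y + D)).comp C)).comp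
          (Z - Y)).comp
            (ContinuousLinearMap.id ℂ H + ((Ring.inverse (C.comp Y + D)).comp C).comp (W - Y)) := by
  have hRQ : ((Ring.inverse (C.comp Z + D)).comp (C.comp Y + D)).comp
      ((Ring.inverse (C.comp Y + D)).comp (C.comp Z + D)) = ContinuousLinearMap.id ℂ H := by
    rw [← mul_def, ← mul_def, ← mul_def, mul_assoc, Ring.mul_inverse_cancel_left _ _ hY,
      Ring.inverse_mul_cancel _ hZ, one_def]
  have hP := inverse_comp_add_comp_add C D hY W
  have hQ := inverse_comp_add_comp_add C D hY Z
  set X := (Ring.inverse (C.comp Y + D)).comp C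
  set P := ContinuousLinearMap.id ℂ H + X.comp (W - Y)
  set Q := (Ring.inverse (C.comp Y + D)).comp (C.comp Z + D)
  set R := (Ring.inverse (C.comp Z + D)).comp (C.comp Y + D)
  have hU : lftSymm C D Y Z = Y - (Z - Y).comp R := rfl
  calc lftSymm C D W (lftSymm C D Y Z)
      = W - (lftSymm C D Y Z - W).comp (Q.comp P) := by
        rw [lftSymm, inverse_comp_lftSymm_add C D hY hZ, comp_assoc, comp_assoc, hP]
        rfl
    _ = W - (Y - W).comp (Q.comp P) + (Z - Y).comp P := by
        rw [hU, sub_right_comm, sub_comp _ ((Z - Y).comp R), comp_assoc (Z - Y) R,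
          ← comp_assoc R Q, hRQ, id_comp]
        abel
    _ = _ := by
        rw [hQ, lftSymm, hP]
        simp only [ContinuousLinearMap.comp_add, ContinuousLinearMap.add_comp,
          ContinuousLinearMap.comp_sub, ContinuousLinearMap.sub_comp, comp_assoc, id_comp]
        abel

end lftSymm

theorem comp_symm_affine_general
    {H K : Type*} [NormedAddCommGroup H] [InnerProductSpace ℂ H] [CompleteSpace H]
    [NormedAddCommGroup K] [InnerProductSpace ℂ K] [CompleteSpace K]
    (𝔄 : Submodule ℂ (H →L[ℂ] K))
    (C : K →L[ℂ] H) (D : H →L[ℂ] H) (Z₀ : 𝔄)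
    (𝒟 : Set ↥𝔄)
    (h𝒟 : 𝒟 = connectedComponentIn {Z : ↥𝔄 | IsUnit (C.comp (Z : H →L[ℂ] K) + D)} Z₀)
    (W Y : ↥𝔄) (hY : Y ∈ 𝒟) (Z : ↥𝔄) (hZ : Z ∈ 𝒟) :
    lftSymm C D (W : H →L[ℂ] K) (lftSymm C D (Y : H →L[ℂ] K) (Z : H →L[ℂ] K)) =
      lftSymm C D (W : H →L[ℂ] K) (Y : H →L[ℂ] K) +
        ((ContinuousLinearMap.id ℂ K +
            ((W : H →L[ℂ] K) - (Y : H →L[ℂ] K)).comp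
              ((Ring.inverse (C.comp (Y : H →L[ℂ] K) + D)).comp C)).comp
          ((Z : H →L[ℂ] K) - (Y : H →L[ℂ] K))).comp
            (ContinuousLinearMap.id ℂ H +
              (((Ring.inverse (C.comp (Y : H →L[ℂ] K) + D)).comp C).comp
                ((W : H →L[ℂ] K) - (Y : H →L[ℂ] K)))) := by
  have h𝒟_subset : 𝒟 ⊆ {A : ↥𝔄 | IsUnit (C.comp (A : H →L[ℂ] K) + D)} :=
    h𝒟 ▸ connectedComponentIn_subset _ _
  exact lftSymm_lftSymm C D W (h𝒟_subset hY) (h𝒟_subset hZ)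

/-- For all `W, Y ∈ 𝒟` the composition `U_W ∘ U_Y` is affine: with `X = (CY+D)⁻¹C`,
`U_W(U_Y(Z)) = U_W(Y) + (I+(W−Y)X)(Z−Y)(I+X(W−Y))` for every `Z ∈ 𝒟`. -/
theorem comp_symm_affine
    {H K : Type*} [NormedAddCommGroup H] [InnerProductSpace ℂ H] [CompleteSpace H]
    [NormedAddCommGroup K] [InnerProductSpace ℂ K] [CompleteSpace K]
    (𝔄 : Submodule ℂ (H →L[ℂ] K)) (h𝔄 : IsClosed (𝔄 : Set (H →L[ℂ] K)))
    (C : K →L[ℂ] H) (D : H →L[ℂ] H) (Z₀ : 𝔄)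
    (hZ₀ : IsUnit (C.comp (Z₀ : H →L[ℂ] K) + D))
    (hX₀ : ∀ Z : 𝔄, (Z : H →L[ℂ] K).comp
      (((Ring.inverse (C.comp (Z₀ : H →L[ℂ] K) + D)).comp C).comp (Z : H →L[ℂ] K)) ∈ 𝔄)
    (𝒟 : Set ↥𝔄)
    (h𝒟 : 𝒟 = connectedComponentIn {Z : ↥𝔄 | IsUnit (C.comp (Z : H →L[ℂ] K) + D)} Z₀)
    (W Y : ↥𝔄) (hW : W ∈ 𝒟) (hY : Y ∈ 𝒟) (Z : ↥𝔄) (hZ : Z ∈ 𝒟) :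
    lftSymm C D (W : H →L[ℂ] K) (lftSymm C D (Y : H →L[ℂ] K) (Z : H →L[ℂ] K)) =
      lftSymm C D (W : H →L[ℂ] K) (Y : H →L[ℂ] K) +
        ((ContinuousLinearMap.id ℂ K +
            ((W : H →L[ℂ] K) - (Y : H →L[ℂ] K)).comp
              ((Ring.inverse (C.comp (Y : H →L[ℂ] K) + D)).comp C)).comp
          ((Z : H →L[ℂ] K) - (Y : H →L[ℂ] K))).comp
            (ContinuousLinearMap.id ℂ H +
              (((Ring.inverse (C.comp (Y : H →L[ℂ] K) + D)).comp C).comp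
                ((W : H →L[ℂ] K) - (Y : H →L[ℂ] K)))) :=
  comp_symm_affine_general 𝔄 C D Z₀ 𝒟 h𝒟 W Y hY Z hZ
end

section
/- For every Z ∈ 𝔄 with ‖X₀(Z−Z₀)‖ < 1 there exists an entire holomorphic function f : ℂ → 𝔄 such that f(λ) ∈ 𝒟 for all λ ∈ ℂ, f(0) = Z₀ and f(1) = Z. -/
open ContinuousLinearMap Set

/-!
Put `T = C Z₀ + D`, `Y = Z - Z₀` and `W = X₀ Y`, so `‖W‖ < 1`. The curve is
`f(λ) = Z₀ + ∑ₙ choose λ (n+1) • Y Wⁿ`, formally `Z₀ + Y W⁻¹ ((1 + W)^λ - 1)`. Since `|choose λ (n+1)|` grows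
only polynomially in `n`, locally uniformly in `λ`, the series converges to an entire function.
Polarizing `Z ↦ Z X₀ Z` shows `Y Wⁿ ∈ 𝔄`, so `f` takes values in the closed subspace `𝔄`.
From `C Y = T W` one gets `C f(λ) + D = T (1 + W)^λ`, where `(1 + W)^λ = ∑ₙ choose λ n • Wⁿ` is
invertible with inverse `(1 + W)^(-λ)` by Vandermonde's identity. Hence the connected range of `f`
lies in the component of `Z₀ = f(0)`, and `f(1) = Z₀ + Y = Z`.
-/

section Choose

variable {𝕜 : Type*} [RCLike 𝕜]

theorem Ring.norm_choose_succ_le (x : 𝕜) (n : ℕ) :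
    ‖Ring.choose x (n + 1)‖ ≤ ‖Ring.choose x n‖ * ((‖x‖ + n) / (n + 1)) := by
  have h := Ring.choose_smul_choose x (n.le_add_right 1)
  rw [Nat.choose_succ_self_right, Nat.add_sub_cancel_left, Ring.choose_one_right,
    nsmul_eq_mul] at h
  have key : ‖Ring.choose x (n + 1)‖ * (n + 1) = ‖Ring.choose x n‖ * ‖x - n‖ := by
    rw [← norm_mul, ← h, norm_mul, mul_comm]; norm_cast
  rw [mul_div_assoc', le_div_iff₀ (by positivity), key]
  gcongr
  exact (norm_sub_le _ _).trans (by simp)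

theorem Ring.norm_choose_le_choose {x : 𝕜} {N : ℕ} (hx : ‖x‖ ≤ N) (n : ℕ) :
    ‖Ring.choose x n‖ ≤ (n + N).choose N := by
  induction n with
  | zero => simp
  | succ n ih =>
    have hrec : ((n + 1 + N).choose N : ℝ) * (n + 1) = (n + N).choose N * (n + 1 + N) := by
      have h := Nat.choose_mul_succ_eq (n + N) N
      rw [show n + N + 1 - N = n + 1 by omega, show n + N + 1 = n + 1 + N by omega] at h
      exact_mod_cast h.symm
    calc ‖Ring.choose x (n + 1)‖ ≤ ‖Ring.choose x n‖ * ((‖x‖ + n) / (n + 1)) :=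
          Ring.norm_choose_succ_le x n
      _ ≤ (n + N).choose N * ((n + 1 + N) / (n + 1)) := by
          gcongr ?_ * ((?_ : ℝ) / _); linarith
      _ = (n + 1 + N).choose N := by
          rw [mul_div_assoc', div_eq_iff (by positivity), hrec]

theorem Ring.norm_choose_succ_le_mul_choose {x : 𝕜} {N : ℕ} (hx : ‖x‖ ≤ N) (n : ℕ) :
    ‖Ring.choose x (n + 1)‖ ≤ (N + 1) * (n + N).choose N := by
  calc ‖Ring.choose x (n + 1)‖ ≤ ‖Ring.choose x n‖ * ((‖x‖ + n) / (n + 1)) :=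
        Ring.norm_choose_succ_le x n
    _ ≤ (n + N).choose N * (N + 1) := by
        gcongr
        · exact Ring.norm_choose_le_choose hx n
        · rw [div_le_iff₀ (by positivity)]; nlinarith
    _ = (N + 1) * (n + N).choose N := mul_comm _ _

theorem Ring.differentiable_choose (n : ℕ) : Differentiable 𝕜 fun x : 𝕜 => Ring.choose x n := by
  simp_rw [Ring.choose_eq_smul, ← Polynomial.aeval_eq_smeval, smul_eq_mul]
  exact (Polynomial.differentiable_aeval _).const_mul _

end Choose

section ChooseSeries

variable {E : Type*} [NormedAddCommGroup E] [NormedSpace ℂ E] {v : ℕ → E} {M r : ℝ}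

theorem norm_choose_succ_smul_le {x : ℂ} {N : ℕ} (hx : ‖x‖ ≤ N)
    (hv : ∀ n, ‖v n‖ ≤ M * r ^ n) (n : ℕ) :
    ‖Ring.choose x (n + 1) • v n‖ ≤ (N + 1) * M * ((n + N).choose N * r ^ n) := by
  rw [norm_smul]
  calc ‖Ring.choose x (n + 1)‖ * ‖v n‖ ≤ ((N + 1) * (n + N).choose N) * (M * r ^ n) :=
        mul_le_mul (Ring.norm_choose_succ_le_mul_choose hx n) (hv n) (norm_nonneg _)
          (by positivity)
    _ = (N + 1) * M * ((n + N).choose N * r ^ n) := by ring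

theorem summable_norm_choose_succ_smul (hr : ‖r‖ < 1) (hv : ∀ n, ‖v n‖ ≤ M * r ^ n) (x : ℂ) :
    Summable fun n => ‖Ring.choose x (n + 1) • v n‖ := by
  obtain ⟨N, hN⟩ := exists_nat_ge ‖x‖
  exact .of_nonneg_of_le (fun _ => norm_nonneg _) (norm_choose_succ_smul_le hN hv)
    ((summable_choose_mul_geometric_of_norm_lt_one N hr).mul_left _)

theorem differentiable_tsum_choose_succ_smul [CompleteSpace E] (hr : ‖r‖ < 1)
    (hv : ∀ n, ‖v n‖ ≤ M * r ^ n) :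
    Differentiable ℂ fun x : ℂ => ∑' n, Ring.choose x (n + 1) • v n := by
  intro x
  obtain ⟨N, hN⟩ := exists_nat_gt ‖x‖
  have hdiffOn : DifferentiableOn ℂ (fun x : ℂ => ∑' n, Ring.choose x (n + 1) • v n)
      (Metric.ball 0 N) :=
    Complex.differentiableOn_tsum_of_summable_norm
      ((summable_choose_mul_geometric_of_norm_lt_one N hr).mul_left _)
      (fun n => ((Ring.differentiable_choose _).smul_const (v n)).differentiableOn)
      Metric.isOpen_ball
      (fun n w hw => norm_choose_succ_smul_le (mem_ball_zero_iff.mp hw).le hv n)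
  exact hdiffOn.differentiableAt (Metric.isOpen_ball.mem_nhds (mem_ball_zero_iff.mpr hN))

theorem tsum_choose_one_succ_smul {V : Type*} [AddCommGroup V] [Module ℂ V] [TopologicalSpace V]
    (v : ℕ → V) :
    ∑' n, Ring.choose (1 : ℂ) (n + 1) • v n = v 0 := by
  rw [tsum_eq_single 0 fun n hn => ?_]
  · simp
  · rw [← Nat.cast_one, Ring.choose_natCast, Nat.choose_eq_zero_of_lt (by omega), Nat.cast_zero,
      zero_smul]

end ChooseSeries

section BinomialSeries

variable {A : Type*} [NormedRing A] [NormedAlgebra ℂ A] {a : A}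

theorem binomialSeries_sum_eq_tsum (a : A) (x : ℂ) :
    (binomialSeries A x).sum a = ∑' n, Ring.choose x n • a ^ n := by
  simp [FormalMultilinearSeries.sum]

theorem summable_norm_choose_smul_pow (ha : ‖a‖ < 1) (x : ℂ) :
    Summable fun n => ‖Ring.choose x n • a ^ n‖ := by
  refine (summable_nat_add_iff 1).mp (summable_norm_choose_succ_smul (v := fun n => a ^ (n + 1))
    (M := ‖a‖) (r := ‖a‖) (by rwa [norm_norm]) (fun n => ?_) x)
  rw [← pow_succ']
  exact norm_pow_le' a n.succ_pos

theorem binomialSeries_sum_eq_one_add [CompleteSpace A] (ha : ‖a‖ < 1) (x : ℂ) :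
    (binomialSeries A x).sum a = 1 + ∑' n, Ring.choose x (n + 1) • a ^ (n + 1) := by
  rw [binomialSeries_sum_eq_tsum, (summable_norm_choose_smul_pow ha x).of_norm.tsum_eq_zero_add]
  simp

theorem binomialSeries_sum_zero (a : A) : (binomialSeries A (0 : ℂ)).sum a = 1 := by
  rw [binomialSeries_sum_eq_tsum, tsum_eq_single 0 fun n hn => ?_]
  · simp
  · obtain ⟨k, rfl⟩ := Nat.exists_eq_succ_of_ne_zero hn
    rw [Ring.choose_zero_succ, zero_smul]

theorem binomialSeries_sum_add [CompleteSpace A] (ha : ‖a‖ < 1) (x y : ℂ) :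
    (binomialSeries A (x + y)).sum a = (binomialSeries A x).sum a * (binomialSeries A y).sum a := by
  simp only [binomialSeries_sum_eq_tsum]
  rw [tsum_mul_tsum_eq_tsum_sum_antidiagonal_of_summable_norm
    (summable_norm_choose_smul_pow ha x) (summable_norm_choose_smul_pow ha y)]
  refine tsum_congr fun n => ?_
  rw [Ring.add_choose_eq n (Commute.all x y), Finset.sum_smul]
  refine Finset.sum_congr rfl fun kl hkl => ?_
  rw [smul_mul_smul_comm, ← pow_add, Finset.HasAntidiagonal.mem_antidiagonal.mp hkl]

theorem isUnit_binomialSeries_sum [CompleteSpace A] (ha : ‖a‖ < 1) (x : ℂ) :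
    IsUnit ((binomialSeries A x).sum a) :=
  isUnit_iff_exists.mpr ⟨(binomialSeries A (-x)).sum a,
    by rw [← binomialSeries_sum_add ha, add_neg_cancel, binomialSeries_sum_zero],
    by rw [← binomialSeries_sum_add ha, neg_add_cancel, binomialSeries_sum_zero]⟩

end BinomialSeries

section Polarization

variable {𝕜 : Type*} [NontriviallyNormedField 𝕜]
  {E F : Type*} [NormedAddCommGroup E] [NormedSpace 𝕜 E] [NormedAddCommGroup F] [NormedSpace 𝕜 F]
  {𝔄 : Submodule 𝕜 (E →L[𝕜] F)} {X : F →L[𝕜] E}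

theorem comp_comp_add_comp_comp_mem (h : ∀ Z ∈ 𝔄, Z ∘L X ∘L Z ∈ 𝔄) {Z₁ Z₂ : E →L[𝕜] F}
    (h₁ : Z₁ ∈ 𝔄) (h₂ : Z₂ ∈ 𝔄) : Z₁ ∘L X ∘L Z₂ + Z₂ ∘L X ∘L Z₁ ∈ 𝔄 := by
  have hexp : Z₁ ∘L X ∘L Z₂ + Z₂ ∘L X ∘L Z₁
      = (Z₁ + Z₂) ∘L X ∘L (Z₁ + Z₂) - Z₁ ∘L X ∘L Z₁ - Z₂ ∘L X ∘L Z₂ := by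
    simp only [comp_add, add_comp]
    abel
  rw [hexp]
  exact sub_mem (sub_mem (h _ (add_mem h₁ h₂)) (h _ h₁)) (h _ h₂)

theorem comp_pow_comp_mem [CharZero 𝕜] (h : ∀ Z ∈ 𝔄, Z ∘L X ∘L Z ∈ 𝔄) {Y : E →L[𝕜] F} (hY : Y ∈ 𝔄)
    (n : ℕ) : Y ∘L (X ∘L Y) ^ n ∈ 𝔄 := by
  induction n with
  | zero => simpa [one_def] using hY
  | succ n ih =>
    have hpolar := comp_comp_add_comp_comp_mem h ih hY
    have e₁ : (Y ∘L (X ∘L Y) ^ n) ∘L X ∘L Y = Y ∘L (X ∘L Y) ^ (n + 1) := by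
      rw [pow_succ, mul_def, comp_assoc]
    have e₂ : Y ∘L X ∘L Y ∘L (X ∘L Y) ^ n = Y ∘L (X ∘L Y) ^ (n + 1) := by
      rw [pow_succ', mul_def, comp_assoc]
    rw [e₁, e₂, ← two_smul 𝕜] at hpolar
    exact (𝔄.smul_mem_iff two_ne_zero).mp hpolar

end Polarization

section Curve

variable {E F : Type*} [NormedAddCommGroup E] [NormedSpace ℂ E] [NormedAddCommGroup F]
  [NormedSpace ℂ F]

theorem norm_comp_pow_le (Y : E →L[ℂ] F) (W : E →L[ℂ] E) (n : ℕ) :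
    ‖Y ∘L W ^ n‖ ≤ ‖Y‖ * ‖W‖ ^ n := by
  induction n with
  | zero => simp [one_def]
  | succ n ih =>
    rw [pow_succ, mul_def, ← comp_assoc, pow_succ, ← mul_assoc]
    exact (opNorm_comp_le _ _).trans (by gcongr)

theorem comp_add_tsum_choose_succ_smul_add_eq_mul [CompleteSpace E] [CompleteSpace F]
    {C : F →L[ℂ] E} {D : E →L[ℂ] E} {Z₀ Y : E →L[ℂ] F} {W : E →L[ℂ] E} (hW : ‖W‖ < 1)
    (hCY : C ∘L Y = (C ∘L Z₀ + D) * W) (x : ℂ) :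
    C ∘L (Z₀ + ∑' n, Ring.choose x (n + 1) • (Y ∘L W ^ n)) + D
      = (C ∘L Z₀ + D) * (binomialSeries _ x).sum W := by
  have hs := (summable_norm_choose_succ_smul (by rwa [norm_norm]) (norm_comp_pow_le Y W) x).of_norm
  have hterm : ∀ n, C ∘L (Ring.choose x (n + 1) • (Y ∘L W ^ n))
      = (C ∘L Z₀ + D) * (Ring.choose x (n + 1) • W ^ (n + 1)) := fun n => by
    rw [comp_smul, ← comp_assoc, hCY, mul_smul_comm, pow_succ', ← mul_assoc]
    rfl
  have hmap := (compL ℂ E F E C).map_tsum hs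
  simp only [compL_apply, hterm] at hmap
  rw [binomialSeries_sum_eq_one_add hW, mul_add, mul_one, comp_add, hmap]
  rw [((summable_nat_add_iff 1).mpr (summable_norm_choose_smul_pow hW x).of_norm).tsum_mul_left]
  abel

end Curve

/-- For every `Z ∈ 𝔄` with `‖X₀(Z−Z₀)‖ < 1` there is an entire function `f : ℂ → 𝔄` taking
all of its values in `𝒟` with `f(0) = Z₀` and `f(1) = Z`. -/
theorem exists_entire_curve_in_domain_of_LFT
    {H K : Type*} [NormedAddCommGroup H] [InnerProductSpace ℂ H] [CompleteSpace H]
    [NormedAddCommGroup K] [InnerProductSpace ℂ K] [CompleteSpace K]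
    (𝔄 : Submodule ℂ (H →L[ℂ] K)) (h𝔄 : IsClosed (𝔄 : Set (H →L[ℂ] K)))
    (C : K →L[ℂ] H) (D : H →L[ℂ] H) (Z₀ : 𝔄)
    (hZ₀ : IsUnit (C.comp (Z₀ : H →L[ℂ] K) + D))
    (hX₀ : ∀ Z : 𝔄, (Z : H →L[ℂ] K).comp
      (((Ring.inverse (C.comp (Z₀ : H →L[ℂ] K) + D)).comp C).comp (Z : H →L[ℂ] K)) ∈ 𝔄)
    (𝒟 : Set ↥𝔄)
    (h𝒟 : 𝒟 = connectedComponentIn {Z : ↥𝔄 | IsUnit (C.comp (Z : H →L[ℂ] K) + D)} Z₀)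
    (Z : ↥𝔄)
    (hZ : ‖((Ring.inverse (C.comp (Z₀ : H →L[ℂ] K) + D)).comp C).comp
      ((Z : H →L[ℂ] K) - (Z₀ : H →L[ℂ] K))‖ < 1) :
    ∃ f : ℂ → ↥𝔄, AnalyticOnNhd ℂ f Set.univ ∧
      (∀ lam : ℂ, f lam ∈ 𝒟) ∧ f 0 = Z₀ ∧ f 1 = Z := by
  have : CompleteSpace 𝔄 := h𝔄.completeSpace_coe
  set T := C ∘L (Z₀ : H →L[ℂ] K) + D
  set Y := (Z : H →L[ℂ] K) - Z₀
  set W := Ring.inverse T ∘L C ∘L Y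
  have hW : ‖W‖ < 1 := hZ
  have hr : ‖‖W‖‖ < 1 := by rwa [norm_norm]
  have hmem : ∀ n, Y ∘L W ^ n ∈ 𝔄 :=
    comp_pow_comp_mem (fun Z' hZ' => hX₀ ⟨Z', hZ'⟩) (sub_mem Z.2 Z₀.2)
  set v : ℕ → 𝔄 := fun n => ⟨Y ∘L W ^ n, hmem n⟩
  have hv : ∀ n, ‖v n‖ ≤ ‖Y‖ * ‖W‖ ^ n := norm_comp_pow_le Y W
  set f : ℂ → 𝔄 := fun x => Z₀ + ∑' n, Ring.choose x (n + 1) • v n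
  have hf : Differentiable ℂ f := (differentiable_tsum_choose_succ_smul hr hv).const_add _
  have hf_coe : ∀ x, (f x : H →L[ℂ] K) = Z₀ + ∑' n, Ring.choose x (n + 1) • (Y ∘L W ^ n) :=
    fun x => by
      have h := 𝔄.subtypeL.map_tsum (summable_norm_choose_succ_smul hr hv x).of_norm
      simp only [Submodule.subtypeL_apply, Submodule.coe_smul] at h
      simp only [f, Submodule.coe_add, h, v]
  have hCY : C ∘L Y = T * W := by
    rw [show T * W = (T * Ring.inverse T) ∘L C ∘L Y from rfl, Ring.mul_inverse_cancel T hZ₀,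
      one_def, id_comp]
  have hunit : ∀ x, IsUnit (C ∘L (f x : H →L[ℂ] K) + D) := fun x => by
    rw [hf_coe, comp_add_tsum_choose_succ_smul_add_eq_mul hW hCY]
    exact hZ₀.mul (isUnit_binomialSeries_sum hW x)
  have hf0 : f 0 = Z₀ := by simp [f]
  have hf1 : f 1 = Z := by
    simp only [f, tsum_choose_one_succ_smul v]
    ext1
    simp [v, Y, one_def]
  refine ⟨f, hf.differentiableOn.analyticOnNhd isOpen_univ, fun x => ?_, hf0, hf1⟩
  rw [h𝒟]
  exact (isPreconnected_range hf.continuous).subset_connectedComponentIn ⟨0, hf0⟩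
    (range_subset_iff.2 hunit) ⟨x, rfl⟩
end

section
/- If C ∈ ℒ(K,H) has finite rank, then there exists a holomorphic function f : ℒ(H,K) → ℂ such that for every Z ∈ ℒ(H,K), the operator I + CZ is invertible in ℒ(H) if and only if f(Z) ≠ 0. -/
/-!
Let `V` be the (finite-dimensional) range of `C` and factor `C = ι ∘ C₀` through it.
By the two-space form of Jacobson's lemma, `1 + ι (C₀ Z)` is invertible on `H` exactly when
`1 + C₀ Z ι` is invertible on `V`, i.e. when its determinant is nonzero. The determinant is a
polynomial in matrix entries, which depend linearly (hence analytically) on `Z`.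
-/

open ContinuousLinearMap Set

theorem AnalyticOnNhd.matrix_det {𝕜 E ι : Type*} [NontriviallyNormedField 𝕜]
    [NormedAddCommGroup E] [NormedSpace 𝕜 E] [Fintype ι] [DecidableEq ι]
    {A : E → Matrix ι ι 𝕜} {s : Set E} (hA : ∀ i j, AnalyticOnNhd 𝕜 (fun x ↦ A x i j) s) :
    AnalyticOnNhd 𝕜 (fun x ↦ (A x).det) s := by
  simp only [Matrix.det_apply']
  exact Finset.analyticOnNhd_fun_sum _ fun σ _ ↦ analyticOnNhd_const.mul <|
    Finset.analyticOnNhd_fun_prod _ fun i _ ↦ hA (σ i) i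

namespace ContinuousLinearMap

section Jacobson

variable {R E F : Type*} [Ring R] [TopologicalSpace E] [AddCommGroup E] [Module R E]
  [IsTopologicalAddGroup E] [TopologicalSpace F] [AddCommGroup F] [Module R F]
  [IsTopologicalAddGroup F]

theorem isUnit_one_add_comp_of_isUnit_one_add_comp_swap (a : F →L[R] E) (b : E →L[R] F)
    (h : IsUnit ((1 : F →L[R] F) + b.comp a)) : IsUnit ((1 : E →L[R] E) + a.comp b) := by
  obtain ⟨v, hv_right, hv_left⟩ := isUnit_iff_exists.1 h
  have hright (y : F) : v y + b (a (v y)) = y := by simpa using congr($hv_right y)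
  have hleft (y : F) : v (y + b (a y)) = y := by simpa using congr($hv_left y)
  refine isUnit_iff_exists.2 ⟨1 - a.comp (v.comp b), ?_, ?_⟩ <;> ext x
  · have hb : b (x - a (v (b x))) = v (b x) := by
      rw [map_sub, sub_eq_iff_eq_add, hright]
    simp only [mul_apply_eq_comp, add_apply, sub_apply, comp_apply, one_apply_eq_self, hb]
    abel
  · have hb : b (x + a (b x)) = b x + b (a (b x)) := map_add b _ _
    simp only [mul_apply_eq_comp, add_apply, sub_apply, comp_apply, one_apply_eq_self, hb, hleft]
    abel

theorem isUnit_one_add_comp_comm (a : F →L[R] E) (b : E →L[R] F) :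
    IsUnit ((1 : E →L[R] E) + a.comp b) ↔ IsUnit ((1 : F →L[R] F) + b.comp a) :=
  ⟨isUnit_one_add_comp_of_isUnit_one_add_comp_swap b a,
    isUnit_one_add_comp_of_isUnit_one_add_comp_swap a b⟩

end Jacobson

section FiniteDimensional

variable {𝕜 E : Type*} [NontriviallyNormedField 𝕜] [CompleteSpace 𝕜] [NormedAddCommGroup E]
  [NormedSpace 𝕜 E] [FiniteDimensional 𝕜 E]

theorem analyticOnNhd_det : AnalyticOnNhd 𝕜 (fun f : E →L[𝕜] E ↦ f.det) univ := by
  let b := Module.finBasis 𝕜 E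
  simp only [ContinuousLinearMap.det, ← LinearMap.det_toMatrix b]
  exact AnalyticOnNhd.matrix_det fun i j ↦
    (LinearMap.toContinuousLinearMap (Matrix.entryLinearMap 𝕜 𝕜 i j ∘ₗ
      (LinearMap.toMatrix b b).toLinearMap ∘ₗ coeLM 𝕜)).analyticOnNhd univ

theorem isUnit_iff_det_ne_zero {f : E →L[𝕜] E} : IsUnit f ↔ f.det ≠ 0 := by
  have : CompleteSpace E := FiniteDimensional.complete 𝕜 E
  rw [isUnit_iff_bijective, ← coe_coe, ← Module.End.isUnit_iff, LinearMap.isUnit_iff_isUnit_det,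
    isUnit_iff_ne_zero]

end FiniteDimensional

end ContinuousLinearMap

theorem exists_det_function_of_finiteRank_general
    {H K : Type*} [NormedAddCommGroup H] [InnerProductSpace ℂ H]
    [NormedAddCommGroup K] [InnerProductSpace ℂ K]
    (C : K →L[ℂ] H) (hC : FiniteDimensional ℂ ↥(LinearMap.range (C : K →ₗ[ℂ] H))) :
    ∃ f : (H →L[ℂ] K) → ℂ, AnalyticOnNhd ℂ f Set.univ ∧
      ∀ Z : H →L[ℂ] K, IsUnit ((1 : H →L[ℂ] H) + C.comp Z) ↔ f Z ≠ 0 := by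
  set V := LinearMap.range (C : K →ₗ[ℂ] H)
  let C₀ : K →L[ℂ] V := C.codRestrict V (LinearMap.mem_range_self (C : K →ₗ[ℂ] H))
  -- `T Z = C₀ ∘ Z ∘ ι`
  let T : (H →L[ℂ] K) →L[ℂ] V →L[ℂ] V :=
    (compL ℂ V H V).flip V.subtypeL ∘L compL ℂ H K V C₀
  refine ⟨fun Z ↦ (1 + T Z).det, ?_, fun Z ↦ ?_⟩
  · -- `apply`, since elaborating `T.analyticOnNhd univ` as a term fails to unify the norm instances
    have hT : AnalyticOnNhd ℂ T univ := by apply ContinuousLinearMap.analyticOnNhd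
    exact analyticOnNhd_det.comp (analyticOnNhd_const.add hT) (mapsTo_univ _ _)
  · exact (isUnit_one_add_comp_comm V.subtypeL (C₀.comp Z)).trans isUnit_iff_det_ne_zero

/-- If `C ∈ ℒ(K,H)` has finite rank, then there is an entire holomorphic function
`f : ℒ(H,K) → ℂ` (a determinant) such that `I + CZ` is invertible iff `f(Z) ≠ 0`. -/
theorem exists_det_function_of_finiteRank
    {H K : Type*} [NormedAddCommGroup H] [InnerProductSpace ℂ H] [CompleteSpace H]
    [NormedAddCommGroup K] [InnerProductSpace ℂ K] [CompleteSpace K]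
    (C : K →L[ℂ] H) (hC : FiniteDimensional ℂ ↥(LinearMap.range (C : K →ₗ[ℂ] H))) :
    ∃ f : (H →L[ℂ] K) → ℂ, AnalyticOnNhd ℂ f Set.univ ∧
      ∀ Z : H →L[ℂ] K, IsUnit ((1 : H →L[ℂ] H) + C.comp Z) ↔ f Z ≠ 0 :=
  exists_det_function_of_finiteRank_general C hC
end

section
/- If CZ is a compact operator for every Z ∈ 𝔄 and the set 𝒟 = {Z ∈ 𝔄 : CZ+D is invertible} is nonempty, then 𝒟 is connected. -/
/-!
For `Z₀, W ∈ 𝒟`, the operators along the complex line `Z₀ + z • (W - Z₀)` are `A + z • T` with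
`A = C Z₀ + D` invertible and `T = C (W - Z₀)` compact. Since `A + z • T = A (1 + z • A⁻¹ T)`,
this fails to be invertible only when `-z⁻¹` lies in the spectrum of the compact operator `A⁻¹ T`,
which is countable: by the Fredholm alternative its nonzero points are eigenvalues, and only
finitely many eigenvalues have modulus `≥ ε`, since otherwise Riesz's lemma applied along the flag
spanned by their eigenvectors yields a bounded sequence whose images are `ε`-separated. The
complement of a countable subset of `ℂ` is path-connected, so `Z₀` and `W` are joined in `𝒟`.
-/

open ContinuousLinearMap Set Module End

section Eigenvectors

variable {ι R M : Type*} [CommRing R] [AddCommGroup M] [Module R M]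

theorem Module.End.sub_smul_mem_span_image_of_mem_span_image_insert {f : End R M}
    {v : ι → M} {μ : ι → R} (hv : ∀ i, f (v i) = μ i • v i) {j : ι} {s : Set ι} {x : M}
    (hx : x ∈ Submodule.span R (v '' insert j s)) :
    f x - μ j • x ∈ Submodule.span R (v '' s) := by
  have hmap : (Submodule.span R (v '' insert j s)).map (f - μ j • 1) ≤
      Submodule.span R (v '' s) := by
    rw [Submodule.map_span_le]
    rintro _ ⟨i, hi, rfl⟩
    rcases eq_or_ne i j with rfl | hij
    · simp [hv]
    · have his : i ∈ s := hi.resolve_left hij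
      have hvi : v i ∈ Submodule.span R (v '' s) := Submodule.subset_span ⟨i, his, rfl⟩
      simpa [hv, ← sub_smul] using Submodule.smul_mem _ (μ i - μ j) hvi
  simpa using hmap ⟨x, hx, rfl⟩

end Eigenvectors

section RieszLemma

variable {𝕜 E : Type*} [NontriviallyNormedField 𝕜] [NormedAddCommGroup E] [NormedSpace 𝕜 E]

theorem Submodule.exists_mem_norm_le_one_le_norm_sub_of_lt {F G : Submodule 𝕜 E}
    (hFG : F < G) (hF : IsClosed (F : Set E)) {c : 𝕜} (hc : 1 < ‖c‖) {R : ℝ} (hR : ‖c‖ < R) :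
    ∃ x ∈ G, ‖x‖ ≤ R ∧ ∀ y ∈ F, 1 ≤ ‖x - y‖ := by
  obtain ⟨x, hxG, hxF⟩ := SetLike.exists_of_lt hFG
  obtain ⟨x₀, hx₀R, hx₀F⟩ := riesz_lemma_of_norm_lt (F := F.comap G.subtype) hc hR
    (hF.preimage continuous_subtype_val) ⟨⟨x, hxG⟩, hxF⟩
  refine ⟨x₀, x₀.2, hx₀R, fun y hy => ?_⟩
  simpa using hx₀F ⟨y, hFG.le hy⟩ hy

theorem norm_le_norm_apply_sub_of_sub_smul_mem {f : E → E} {μ : 𝕜} (hμ : μ ≠ 0)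
    {F : Submodule 𝕜 E} {x z : E} (hx : f x - μ • x ∈ F) (hz : z ∈ F)
    (hx_far : ∀ y ∈ F, 1 ≤ ‖x - y‖) : ‖μ‖ ≤ ‖f x - z‖ := by
  set y := μ⁻¹ • (z - (f x - μ • x))
  have hy : y ∈ F := F.smul_mem _ (F.sub_mem hz hx)
  have hfx : f x - z = μ • (x - y) := by
    simp only [y, smul_sub, smul_inv_smul₀ hμ]
    abel
  calc ‖μ‖ = ‖μ‖ * 1 := (mul_one _).symm
    _ ≤ ‖μ‖ * ‖x - y‖ := by gcongr; exact hx_far y hy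
    _ = ‖f x - z‖ := by rw [hfx, norm_smul]

end RieszLemma

namespace IsCompactOperator

variable {𝕜 X Y : Type*} [NontriviallyNormedField 𝕜] [NormedAddCommGroup X] [NormedSpace 𝕜 X]
  [NormedAddCommGroup Y] [NormedSpace 𝕜 Y]

theorem exists_lt_norm_sub_apply_lt {T : X →L[𝕜] Y} (hT : IsCompactOperator T) {x : ℕ → X}
    {R : ℝ} (hx : ∀ n, ‖x n‖ ≤ R) {ε : ℝ} (hε : 0 < ε) :
    ∃ m n, m < n ∧ ‖T (x n) - T (x m)‖ < ε := by
  obtain ⟨K, hK, hTK⟩ := hT.image_closedBall_subset_compact R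
  obtain ⟨y, -, φ, hφ, hy⟩ := hK.tendsto_subseq (x := fun n => T (x n))
    (fun n => hTK ⟨x n, by simpa using hx n, rfl⟩)
  obtain ⟨N, hN⟩ := Metric.cauchySeq_iff'.1 hy.cauchySeq ε hε
  exact ⟨φ N, φ (N + 1), hφ N.lt_succ_self, by simpa [dist_eq_norm] using hN (N + 1) N.le_succ⟩

variable [CompleteSpace 𝕜] {T : X →L[𝕜] X}

theorem exists_norm_lt_of_hasEigenvector (hT : IsCompactOperator T) {μ : ℕ → 𝕜}
    (hμ : Function.Injective μ) {e : ℕ → X} (he : ∀ n, HasEigenvector (T : End 𝕜 X) (μ n) (e n))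
    {ε : ℝ} (hε : 0 < ε) : ∃ n, ‖μ n‖ < ε := by
  by_contra! hμ_norm
  have hTe (n : ℕ) : T (e n) = μ n • e n := (he n).apply_eq_smul
  have he_indep : LinearIndependent 𝕜 e := eigenvectors_linearIndependent' _ μ hμ e he
  set F : ℕ → Submodule 𝕜 X := fun n => Submodule.span 𝕜 (e '' Iio n)
  set G : ℕ → Submodule 𝕜 X := fun n => Submodule.span 𝕜 (e '' Iic n)
  have hFG (n : ℕ) : F n < G n := by
    refine lt_of_le_of_ne (Submodule.span_mono (image_mono Iio_subset_Iic_self)) fun h => ?_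
    have : e n ∈ F n := h ▸ Submodule.subset_span ⟨n, mem_Iic.2 le_rfl, rfl⟩
    exact he_indep.notMem_span_image (self_notMem_Iio (a := n)) this
  have hF_closed (n : ℕ) : IsClosed (F n : Set X) :=
    haveI := FiniteDimensional.span_of_finite 𝕜 ((finite_Iio n).image e)
    Submodule.closed_of_finiteDimensional _
  have hGF {m n : ℕ} (hmn : m < n) : G m ≤ F n :=
    Submodule.span_mono (image_mono (Iic_subset_Iio.2 hmn))
  have hsub (n : ℕ) {x : X} (hx : x ∈ G n) : T x - μ n • x ∈ F n :=
    sub_smul_mem_span_image_of_mem_span_image_insert (f := (T : End 𝕜 X)) hTe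
      (Iio_insert (a := n) ▸ hx)
  obtain ⟨c, hc⟩ := NormedField.exists_one_lt_norm 𝕜
  choose x hxG hxR hx_far using fun n =>
    Submodule.exists_mem_norm_le_one_le_norm_sub_of_lt (hFG n) (hF_closed n) hc
      (lt_add_one ‖c‖)
  have hsep {m n : ℕ} (hmn : m < n) : ε ≤ ‖T (x n) - T (x m)‖ := by
    have hμn : μ n ≠ 0 := norm_pos_iff.1 (hε.trans_le (hμ_norm n))
    have hTxm : T (x m) ∈ F n := by
      have : T (x m) = (T (x m) - μ m • x m) + μ m • x m := by abel
      exact this ▸ hGF hmn (Submodule.add_mem _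
        (Submodule.span_mono (image_mono Iio_subset_Iic_self) (hsub m (hxG m)))
        (Submodule.smul_mem _ _ (hxG m)))
    exact (hμ_norm n).trans
      (norm_le_norm_apply_sub_of_sub_smul_mem hμn (hsub n (hxG n)) hTxm (hx_far n))
  obtain ⟨m, n, hmn, hlt⟩ := hT.exists_lt_norm_sub_apply_lt hxR hε
  exact (hsep hmn).not_gt hlt

theorem finite_setOf_le_norm_hasEigenvalue (hT : IsCompactOperator T) {ε : ℝ} (hε : 0 < ε) :
    {μ : 𝕜 | ε ≤ ‖μ‖ ∧ HasEigenvalue (T : End 𝕜 X) μ}.Finite := by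
  by_contra hinf
  set μ := Set.Infinite.natEmbedding _ hinf
  choose e he using fun n => (μ n).2.2.exists_hasEigenvector
  obtain ⟨n, hn⟩ := hT.exists_norm_lt_of_hasEigenvector
    (fun _ _ h => μ.injective (Subtype.ext h)) he hε
  exact (μ n).2.1.not_gt hn

theorem countable_spectrum [CompleteSpace X] (hT : IsCompactOperator T) :
    (spectrum 𝕜 T).Countable := by
  have hsub : spectrum 𝕜 T ⊆
      {0} ∪ ⋃ n : ℕ, {μ : 𝕜 | 1 / (n + 1) ≤ ‖μ‖ ∧ HasEigenvalue (T : End 𝕜 X) μ} := by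
    intro μ hμ
    rcases eq_or_ne μ 0 with rfl | hμ0
    · exact Or.inl rfl
    · obtain ⟨n, hn⟩ := exists_nat_one_div_lt (norm_pos_iff.2 hμ0)
      exact Or.inr (mem_iUnion.2 ⟨n, hn.le, (hasEigenvalue_iff_mem_spectrum hT hμ0).2 hμ⟩)
  exact ((countable_singleton 0).union (countable_iUnion fun n =>
    (hT.finite_setOf_le_norm_hasEigenvalue (by positivity)).countable)).mono hsub

theorem countable_setOf_not_isUnit_add_smul [CompleteSpace X] {A : X →L[𝕜] X} (hA : IsUnit A)
    (hT : IsCompactOperator T) : {z : 𝕜 | ¬ IsUnit (A + z • T)}.Countable := by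
  obtain ⟨u, rfl⟩ := hA
  set S : X →L[𝕜] X := ↑u⁻¹ * T
  have hS : IsCompactOperator S := hT.clm_comp _
  refine (hS.countable_spectrum.preimage (neg_injective.comp inv_injective)).mono fun z hz => ?_
  by_contra hσ
  refine hz ?_
  rcases eq_or_ne z 0 with rfl | hz0
  · simp
  have hfactor : (u : X →L[𝕜] X) + z • T = u * ((-z) • (algebraMap 𝕜 _ (-z⁻¹) - S)) := by
    rw [Algebra.algebraMap_eq_smul_one, smul_sub, smul_smul, neg_mul_neg, mul_inv_cancel₀ hz0,
      one_smul, sub_eq_add_neg, ← neg_smul, neg_neg, mul_add, mul_one, mul_smul_comm, ← mul_assoc,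
      u.mul_inv, one_mul]
  rw [hfactor]
  exact u.isUnit.mul ((spectrum.notMem_iff.1 hσ).smul (Units.mk0 (-z) (neg_ne_zero.2 hz0)))

end IsCompactOperator

theorem IsCompactOperator.isPathConnected_setOf_isUnit_add_smul {X : Type*} [NormedAddCommGroup X]
    [NormedSpace ℂ X] [CompleteSpace X] {A T : X →L[ℂ] X} (hA : IsUnit A)
    (hT : IsCompactOperator T) : IsPathConnected {z : ℂ | IsUnit (A + z • T)} := by
  simpa [compl_ofPred] using
    (hT.countable_setOf_not_isUnit_add_smul hA).isPathConnected_compl_of_one_lt_rank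
    (by rw [Complex.rank_real_complex]; norm_num)

theorem connected_of_compact_general
    {H K : Type*} [NormedAddCommGroup H] [InnerProductSpace ℂ H] [CompleteSpace H]
    [NormedAddCommGroup K] [InnerProductSpace ℂ K]
    (𝔄 : Submodule ℂ (H →L[ℂ] K))
    (C : K →L[ℂ] H) (D : H →L[ℂ] H)
    (hcpt : ∀ Z : 𝔄, IsCompactOperator (C.comp (Z : H →L[ℂ] K)))
    (hne : {Z : ↥𝔄 | IsUnit (C.comp (Z : H →L[ℂ] K) + D)}.Nonempty) :
    IsConnected {Z : ↥𝔄 | IsUnit (C.comp (Z : H →L[ℂ] K) + D)} := by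
  obtain ⟨Z₀, hZ₀⟩ := hne
  refine IsPathConnected.isConnected ⟨Z₀, hZ₀, fun {W} hW => ?_⟩
  set line : ℂ → 𝔄 := fun z => Z₀ + z • (W - Z₀)
  have hline : Continuous line := by fun_prop
  have hline_apply (z : ℂ) : C.comp (line z : H →L[ℂ] K) + D =
      (C.comp (Z₀ : H →L[ℂ] K) + D) + z • C.comp ((W - Z₀ : 𝔄) : H →L[ℂ] K) := by
    simp only [line, Submodule.coe_add, Submodule.coe_smul, comp_add, comp_smul]
    abel
  have hU : IsPathConnected (line ⁻¹' {Z : 𝔄 | IsUnit (C.comp (Z : H →L[ℂ] K) + D)}) := by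
    simpa only [preimage_ofPred_eq, hline_apply] using
      (hcpt (W - Z₀)).isPathConnected_setOf_isUnit_add_smul hZ₀
  have hJ := (hU.image hline).joinedIn (line 0) ⟨0, by simpa [line] using hZ₀, rfl⟩ (line 1)
    ⟨1, by simpa [line] using hW, rfl⟩
  simpa [line] using hJ.mono (image_preimage_subset _ _)

/-- If `CZ` is a compact operator for every `Z ∈ 𝔄` and the set
`𝒟 = {Z ∈ 𝔄 : CZ+D invertible}` is nonempty, then `𝒟` is connected. -/
theorem connected_of_compact
    {H K : Type*} [NormedAddCommGroup H] [InnerProductSpace ℂ H] [CompleteSpace H]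
    [NormedAddCommGroup K] [InnerProductSpace ℂ K] [CompleteSpace K]
    (𝔄 : Submodule ℂ (H →L[ℂ] K)) (h𝔄 : IsClosed (𝔄 : Set (H →L[ℂ] K)))
    (C : K →L[ℂ] H) (D : H →L[ℂ] H)
    (hcpt : ∀ Z : 𝔄, IsCompactOperator (C.comp (Z : H →L[ℂ] K)))
    (hne : {Z : ↥𝔄 | IsUnit (C.comp (Z : H →L[ℂ] K) + D)}.Nonempty) :
    IsConnected {Z : ↥𝔄 | IsUnit (C.comp (Z : H →L[ℂ] K) + D)} :=
  connected_of_compact_general 𝔄 C D hcpt hne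
end

section
/- Let C₁, C₂ ∈ ℒ(K,H), D₁, D₂ ∈ ℒ(H), and put 𝒟ᵢ = {Z ∈ ℒ(H,K) : CᵢZ+Dᵢ is invertible} for i = 1, 2. Suppose there exists an invertible R ∈ ℒ(K) with C₂ = C₁R. Then for each Z₁ ∈ 𝒟₁ and Z₂ ∈ 𝒟₂, the affine map φ(Z) = Z₂ + R⁻¹(Z−Z₁)(C₁Z₁+D₁)⁻¹(C₂Z₂+D₂) is a bijection of 𝒟₁ onto 𝒟₂ with affine inverse, and φ(Z₁) = Z₂. -/
/-!
Write `Mᵢ = CᵢZᵢ + Dᵢ`. Since `C₂R⁻¹ = C₁` and `M₁(M₁⁻¹M₂) = M₂`, the map `φ` satisfies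
`C₂φ(Z) + D₂ = (C₁Z + D₁)M₁⁻¹M₂`, so it multiplies the operator whose invertibility defines `𝒟₁`
by a fixed invertible operator and therefore maps `𝒟₁` into `𝒟₂`. The same computation with the
roles of the indices exchanged applies to `ψ(W) = Z₁ + R(W - Z₂)M₂⁻¹M₁`, which maps `𝒟₂` into
`𝒟₁` and is inverse to `φ`.
-/

open ContinuousLinearMap Set

namespace ContinuousLinearMap

variable {𝕜 E F : Type*} [Ring 𝕜]
  [TopologicalSpace E] [AddCommGroup E] [Module 𝕜 E]
  [TopologicalSpace F] [AddCommGroup F] [Module 𝕜 F] [IsTopologicalAddGroup F]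

theorem affine_sub_affine_cancel {A A' : F →L[𝕜] F} {B B' : E →L[𝕜] E}
    (hA : A' * A = 1) (hB : B * B' = 1) (Z₀ W₀ Z : E →L[𝕜] F) :
    Z₀ + (A'.comp (W₀ + (A.comp (Z - Z₀)).comp B - W₀)).comp B' = Z := by
  rw [add_sub_cancel_left, ← comp_assoc, ← comp_assoc, ← mul_def, hA, one_def, id_comp,
    comp_assoc, ← mul_def, hB, one_def, comp_id, add_sub_cancel]

variable [IsTopologicalAddGroup E]

theorem comp_affine_add_eq {C C' : F →L[𝕜] E} {D D' : E →L[𝕜] E} {A : F →L[𝕜] F}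
    {B : E →L[𝕜] E} {Z₀ W₀ : E →L[𝕜] F} (hA : C'.comp A = C)
    (hB : (C.comp Z₀ + D).comp B = C'.comp W₀ + D') (Z : E →L[𝕜] F) :
    C'.comp (W₀ + (A.comp (Z - Z₀)).comp B) + D' = (C.comp Z + D).comp B := by
  have hsplit : (C.comp Z + D).comp B =
      (C.comp Z₀ + D).comp B + ((C'.comp A).comp (Z - Z₀)).comp B := by
    rw [hA, comp_sub, add_comp, add_comp, sub_comp]
    abel
  rw [hsplit, hB, comp_add, ← comp_assoc, ← comp_assoc]
  abel

theorem isUnit_comp_affine_add {C C' : F →L[𝕜] E} {D D' : E →L[𝕜] E} {A : F →L[𝕜] F}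
    {B : E →L[𝕜] E} {Z₀ W₀ : E →L[𝕜] F} (hA : C'.comp A = C)
    (hB : (C.comp Z₀ + D).comp B = C'.comp W₀ + D') (hBu : IsUnit B) {Z : E →L[𝕜] F}
    (hZ : IsUnit (C.comp Z + D)) :
    IsUnit (C'.comp (W₀ + (A.comp (Z - Z₀)).comp B) + D') := by
  rw [comp_affine_add_eq hA hB, ← mul_def]
  exact hZ.mul hBu

end ContinuousLinearMap

theorem Ring.inverse_mul_mul_inverse_mul_cancel {M : Type*} [MonoidWithZero M] {a b : M}
    (ha : IsUnit a) (hb : IsUnit b) : Ring.inverse a * b * (Ring.inverse b * a) = 1 := by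
  rw [mul_assoc, Ring.mul_inverse_cancel_left _ _ hb, Ring.inverse_mul_cancel _ ha]

/-- If `C₂ = C₁R` with `R` invertible, then for any `Z₁ ∈ 𝒟₁` and `Z₂ ∈ 𝒟₂` the affine map
`φ(Z) = Z₂ + R⁻¹(Z−Z₁)(C₁Z₁+D₁)⁻¹(C₂Z₂+D₂)` is a bijection of `𝒟₁` onto `𝒟₂` with affine
inverse, and `φ(Z₁) = Z₂`. -/
theorem affine_equiv_of_domains
    {H K : Type*} [NormedAddCommGroup H] [InnerProductSpace ℂ H] [CompleteSpace H]
    [NormedAddCommGroup K] [InnerProductSpace ℂ K] [CompleteSpace K]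
    (C₁ C₂ : K →L[ℂ] H) (D₁ D₂ : H →L[ℂ] H)
    (𝒟₁ 𝒟₂ : Set (H →L[ℂ] K))
    (h𝒟₁ : 𝒟₁ = {Z : H →L[ℂ] K | IsUnit (C₁.comp Z + D₁)})
    (h𝒟₂ : 𝒟₂ = {Z : H →L[ℂ] K | IsUnit (C₂.comp Z + D₂)})
    (R : K →L[ℂ] K) (hR : IsUnit R) (hC : C₂ = C₁.comp R)
    (Z₁ : H →L[ℂ] K) (hZ₁ : Z₁ ∈ 𝒟₁) (Z₂ : H →L[ℂ] K) (hZ₂ : Z₂ ∈ 𝒟₂)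
    (φ : (H →L[ℂ] K) → (H →L[ℂ] K))
    (hφ : ∀ Z, φ Z = Z₂ + ((Ring.inverse R).comp (Z - Z₁)).comp
      ((Ring.inverse (C₁.comp Z₁ + D₁)).comp (C₂.comp Z₂ + D₂))) :
    Set.BijOn φ 𝒟₁ 𝒟₂ ∧ φ Z₁ = Z₂ ∧
      ∃ (A : K →L[ℂ] K) (B : H →L[ℂ] H) (ψ : (H →L[ℂ] K) → (H →L[ℂ] K)),
        (∀ Z, ψ Z = Z₁ + (A.comp (Z - Z₂)).comp B) ∧
        (∀ Z ∈ 𝒟₁, ψ (φ Z) = Z) ∧ (∀ W ∈ 𝒟₂, φ (ψ W) = W) := by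
  subst h𝒟₁ h𝒟₂
  set M₁ := C₁.comp Z₁ + D₁
  set M₂ := C₂.comp Z₂ + D₂
  set ψ := fun W ↦ Z₁ + (R.comp (W - Z₂)).comp (Ring.inverse M₂ * M₁)
  have hC₁ : C₂.comp (Ring.inverse R) = C₁ := by
    rw [hC, comp_assoc, ← mul_def, Ring.mul_inverse_cancel _ hR, one_def, comp_id]
  have hψφ (Z) : ψ (φ Z) = Z := by
    simp only [ψ, hφ, ← mul_def]
    exact affine_sub_affine_cancel (Ring.mul_inverse_cancel _ hR)
      (Ring.inverse_mul_mul_inverse_mul_cancel hZ₁ hZ₂) _ _ _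
  have hφψ (W) : φ (ψ W) = W := by
    simp only [ψ, hφ, ← mul_def]
    exact affine_sub_affine_cancel (Ring.inverse_mul_cancel _ hR)
      (Ring.inverse_mul_mul_inverse_mul_cancel hZ₂ hZ₁) _ _ _
  have hφ_maps : MapsTo φ {Z | IsUnit (C₁.comp Z + D₁)} {W | IsUnit (C₂.comp W + D₂)} :=
    fun Z hZ ↦ hφ Z ▸ isUnit_comp_affine_add hC₁ (Ring.mul_inverse_cancel_left _ M₂ hZ₁)
      (hZ₁.ringInverse.mul hZ₂) hZ
  have hψ_maps : MapsTo ψ {W | IsUnit (C₂.comp W + D₂)} {Z | IsUnit (C₁.comp Z + D₁)} :=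
    fun W hW ↦ isUnit_comp_affine_add hC.symm (Ring.mul_inverse_cancel_left _ M₁ hZ₂)
      (hZ₂.ringInverse.mul hZ₁) hW
  exact ⟨InvOn.bijOn ⟨fun Z _ ↦ hψφ Z, fun W _ ↦ hφψ W⟩ hφ_maps hψ_maps, by simp [hφ],
    R, _, ψ, fun _ ↦ rfl, fun Z _ ↦ hψφ Z, fun W _ ↦ hφψ W⟩
end

section
/- Let J ∈ ℒ(H) be self-adjoint and suppose 1 and −1 are eigenvalues of J. Put 𝒟 = {z ∈ H : ⟨Jz, z⟩ < 0}. Then the group of invertible bounded linear maps of H preserving 𝒟 acts transitively on 𝒟: for all z, w ∈ 𝒟 there exists an invertible bounded linear map L : H → H with L(𝒟) = 𝒟 and L(z) = w. -/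
/-!
Write `Q u = ⟪J u, u⟫`, which is real because `J` is self-adjoint. Given `z, w ∈ 𝒟`, pick a scalar
`μ` with `|μ|² = Q z / Q w` whose phase makes `⟪J z, μ w⟫` real and different from `Q z`. Then
`Q (μ w) = Q z`, and the `J`-reflection `u ↦ u - 2 ⟪J v, u⟫ / Q v • v` along `v = z - μ w` preserves
`Q` and sends `z` to `μ w`. So `μ⁻¹` times this reflection maps `z` to `w` and multiplies `Q` by
`|μ|⁻² > 0`, hence maps `𝒟` onto itself.
-/

section

open RCLike ComplexConjugate

variable {𝕜 E : Type*} [RCLike 𝕜] [NormedAddCommGroup E] [InnerProductSpace 𝕜 E]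

theorem RCLike.exists_norm_eq_mul_eq_ofReal_ne (c : 𝕜) {a : ℝ} (ha : a ≠ 0) {r : ℝ} (hr : 0 < r) :
    ∃ μ : 𝕜, ‖μ‖ = r ∧ ∃ t : ℝ, t ≠ a ∧ μ * c = t := by
  by_cases hc : c = 0
  · exact ⟨r, by simp [hr.le], 0, ha.symm, by simp [hc]⟩
  set μ₀ : 𝕜 := r * conj c / ‖c‖
  have hμ₀ : ‖μ₀‖ = r := by simp [μ₀, hr.le, hc]
  have hμ₀c : μ₀ * c = (r * ‖c‖ : ℝ) := by
    have hc' : (‖c‖ : 𝕜) ≠ 0 := by simpa using hc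
    rw [div_mul_eq_mul_div, mul_assoc, RCLike.conj_mul]
    field_simp
    push_cast
    ring
  by_cases h : r * ‖c‖ = a
  · refine ⟨-μ₀, by rw [norm_neg, hμ₀], -a, ?_, by rw [neg_mul, hμ₀c, h, ofReal_neg]⟩
    exact fun h' => ha (by linarith)
  · exact ⟨μ₀, hμ₀, _, h, hμ₀c⟩

namespace ContinuousLinearMap

local notation "⟪" x ", " y "⟫" => inner 𝕜 x y

variable (J : E →L[𝕜] E)

/-- When `⟪J v, v⟫ = 0` this is the identity, since `2 / 0 = 0`. -/
noncomputable def jReflection (v : E) : E →L[𝕜] E :=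
  ContinuousLinearMap.id 𝕜 E - (2 / ⟪J v, v⟫) • (innerSL 𝕜 (J v)).smulRight v

variable {J}

theorem jReflection_apply (v u : E) :
    J.jReflection v u = u - (2 / ⟪J v, v⟫ * ⟪J v, u⟫) • v := by
  simp [jReflection, smul_smul]

theorem inner_jReflection_left (v u : E) (hv : ⟪J v, v⟫ ≠ 0) :
    ⟪J v, J.jReflection v u⟫ = -⟪J v, u⟫ := by
  rw [jReflection_apply, inner_sub_right, inner_smul_right]
  field_simp
  ring

theorem jReflection_jReflection (v u : E) : J.jReflection v (J.jReflection v u) = u := by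
  by_cases hv : ⟪J v, v⟫ = 0
  · simp [jReflection_apply, hv]
  rw [jReflection_apply _ (J.jReflection v u), inner_jReflection_left v u hv, jReflection_apply,
    mul_neg, neg_smul, sub_neg_eq_add, sub_add_cancel]

theorem inner_map_jReflection_self (hJ : (J : E →ₗ[𝕜] E).IsSymmetric) (v u : E) :
    ⟪J (J.jReflection v u), J.jReflection v u⟫ = ⟪J u, u⟫ := by
  have hvv : conj ⟪J v, v⟫ = ⟪J v, v⟫ := hJ.conj_inner_sym v v
  have huv : ⟪J u, v⟫ = conj ⟪J v, u⟫ := (hJ.conj_inner_sym v u).symm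
  rw [jReflection_apply, map_sub, map_smul, inner_sub_left, inner_sub_right, inner_sub_right,
    inner_smul_left, inner_smul_right, inner_smul_left, inner_smul_right, huv, map_mul, map_div₀,
    hvv, map_ofNat]
  by_cases hv : ⟪J v, v⟫ = 0
  · simp [hv]
  field_simp
  ring

theorem jReflection_sub_apply_left (hJ : (J : E →ₗ[𝕜] E).IsSymmetric) {z w : E}
    (hzw : ⟪J w, w⟫ = ⟪J z, z⟫) (hreal : conj ⟪J z, w⟫ = ⟪J z, w⟫) (hne : ⟪J z, w⟫ ≠ ⟪J z, z⟫) :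
    J.jReflection (z - w) z = w := by
  have hwz : ⟪J w, z⟫ = ⟪J z, w⟫ := by rw [← hreal]; exact (hJ.conj_inner_sym z w).symm
  have hvz : ⟪J (z - w), z⟫ = ⟪J z, z⟫ - ⟪J z, w⟫ := by rw [map_sub, inner_sub_left, hwz]
  have hvv : ⟪J (z - w), z - w⟫ = 2 * (⟪J z, z⟫ - ⟪J z, w⟫) := by
    rw [inner_sub_right, hvz, map_sub, inner_sub_left, hzw]; ring
  have hne' : ⟪J z, z⟫ - ⟪J z, w⟫ ≠ 0 := sub_ne_zero.mpr hne.symm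
  rw [jReflection_apply, hvz, hvv, div_mul_eq_mul_div, mul_div_mul_right _ _ hne',
    div_self two_ne_zero, one_smul, sub_sub_cancel]

theorem inner_map_smul_smul_self (c : 𝕜) (u : E) :
    ⟪J (c • u), c • u⟫ = ((‖c‖ ^ 2 : ℝ) : 𝕜) * ⟪J u, u⟫ := by
  rw [map_smul, inner_smul_left, inner_smul_right, ← mul_assoc, RCLike.conj_mul, ofReal_pow]

theorem exists_continuousLinearEquiv_inner_map_self_eq_smul_and_apply_eq
    (hJ : (J : E →ₗ[𝕜] E).IsSymmetric) {z w : E} (hzw : 0 < re ⟪J z, z⟫ / re ⟪J w, w⟫) :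
    ∃ L : E ≃L[𝕜] E, ∃ c : ℝ, 0 < c ∧ (∀ u, ⟪J (L u), L u⟫ = (c : 𝕜) * ⟪J u, u⟫) ∧ L z = w := by
  set a := re ⟪J z, z⟫
  set b := re ⟪J w, w⟫
  have hz : (a : 𝕜) = ⟪J z, z⟫ := hJ.coe_re_inner_apply_self z
  have hw : (b : 𝕜) = ⟪J w, w⟫ := hJ.coe_re_inner_apply_self w
  have ha : a ≠ 0 := by rintro h; simp [h] at hzw
  have hb : b ≠ 0 := by rintro h; simp [h] at hzw
  have hr : 0 < √(a / b) := Real.sqrt_pos.mpr hzw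
  obtain ⟨μ, hμ, t, hta, hμt⟩ := exists_norm_eq_mul_eq_ofReal_ne ⟪J z, w⟫ ha hr
  have hμ0 : μ ≠ 0 := norm_pos_iff.mp (hμ ▸ hr)
  have hw' : ⟪J (μ • w), μ • w⟫ = ⟪J z, z⟫ := by
    rw [inner_map_smul_smul_self, hμ, Real.sq_sqrt hzw.le, ← hw, ← hz, ← ofReal_mul,
      div_mul_cancel₀ _ hb]
  have hzw' : ⟪J z, μ • w⟫ = t := by rw [inner_smul_right, hμt]
  have hR : J.jReflection (z - μ • w) z = μ • w := by
    -- `t ≠ Q z` is what makes `⟪J v, v⟫ = 2 (Q z - t)` nonzero for `v = z - μ • w`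
    refine jReflection_sub_apply_left hJ hw' (by rw [hzw', conj_ofReal]) ?_
    rw [hzw', ← hz]
    exact_mod_cast hta
  set R := J.jReflection (z - μ • w)
  refine ⟨.equivOfInverse (μ⁻¹ • R) (μ • R) ?_ ?_, (‖μ‖ ^ 2)⁻¹, by positivity, ?_, ?_⟩
  iterate 2 · intro u; simp [R, jReflection_jReflection, smul_smul, hμ0]
  · intro u
    show ⟪J (μ⁻¹ • R u), μ⁻¹ • R u⟫ = _
    rw [inner_map_smul_smul_self, inner_map_jReflection_self hJ, norm_inv, inv_pow]
  · simp [hR, smul_smul, hμ0]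

theorem image_setOf_re_inner_map_self_neg (L : E ≃L[𝕜] E) {c : ℝ} (hc : 0 < c)
    (hL : ∀ u, ⟪J (L u), L u⟫ = (c : 𝕜) * ⟪J u, u⟫) :
    L '' {z | re ⟪J z, z⟫ < 0} = {z | re ⟪J z, z⟫ < 0} := by
  ext u
  have hu := hL (L.symm u)
  rw [L.apply_symm_apply] at hu
  rw [L.image_eq_preimage_symm, Set.mem_preimage, Set.mem_ofPred_eq, Set.mem_ofPred_eq, hu,
    re_ofReal_mul]
  exact (smul_neg_iff_of_pos_left hc).symm

end ContinuousLinearMap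

end

theorem transitive_linear_group_of_hyperbolic_domain_general
    {H : Type*} [NormedAddCommGroup H] [InnerProductSpace ℂ H] [CompleteSpace H]
    (J : H →L[ℂ] H) (hJ : IsSelfAdjoint J)
    (𝒟 : Set H) (h𝒟 : 𝒟 = {z : H | (inner ℂ (J z) z : ℂ).re < 0})
    (z : H) (hz : z ∈ 𝒟) (w : H) (hw : w ∈ 𝒟) :
    ∃ L : H ≃L[ℂ] H, L '' 𝒟 = 𝒟 ∧ L z = w := by
  subst h𝒟
  obtain ⟨L, c, hc, hL, hLz⟩ :=
    J.exists_continuousLinearEquiv_inner_map_self_eq_smul_and_apply_eq hJ.isSymmetric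
      (div_pos_of_neg_of_neg hz hw)
  exact ⟨L, J.image_setOf_re_inner_map_self_neg L hc hL, hLz⟩

/-- If `J` is self-adjoint with eigenvalues `1` and `−1`, then the group of invertible bounded
linear maps preserving `𝒟 = {z : ⟨Jz,z⟩ < 0}` acts transitively on `𝒟`. -/
theorem transitive_linear_group_of_hyperbolic_domain
    {H : Type*} [NormedAddCommGroup H] [InnerProductSpace ℂ H] [CompleteSpace H]
    (J : H →L[ℂ] H) (hJ : IsSelfAdjoint J)
    (e : H) (he : e ≠ 0) (hJe : J e = e)
    (f : H) (hf : f ≠ 0) (hJf : J f = -f)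
    (𝒟 : Set H) (h𝒟 : 𝒟 = {z : H | (inner ℂ (J z) z : ℂ).re < 0})
    (z : H) (hz : z ∈ 𝒟) (w : H) (hw : w ∈ 𝒟) :
    ∃ L : H ≃L[ℂ] H, L '' 𝒟 = 𝒟 ∧ L z = w :=
  transitive_linear_group_of_hyperbolic_domain_general J hJ 𝒟 h𝒟 z hz w hw
end
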